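/- arXiv:1311.6439 — 2 statements merged into one kernel-verified Lean document; each statement's English description precedes it below -/
import Mathlib

section
/- Strict positivity of the transfer scaling factors: in the multiuser MIMO setup with the matrix X as defined, since σ² > 0 the matrix X is invertible and the unique solution β ∈ ℝ^K of the linear system X·β = σ²·(tr(Q_1),…,tr(Q_K))ᵀ satisfies β_k > 0 for every k ∈ {1,…,K}. -/
open Matrix BigOperators ComplexOrder

noncomputable section

/-- A diagonal complex matrix built from a real vector. -/
def diagC {n : ℕ} (v : Fin n → ℝ) : Matrix (Fin n) (Fin n) ℂ :=
  Matrix.diagonal (fun i => (v i : ℂ))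

/-- The multiuser MIMO setup: `K` users, `N` BS antennas, per-user antenna counts `M k`,
symbol counts `S k`, estimated channels `H k`, transmit/receive filters `G k`, `U k` with
unit-norm columns, invertible real diagonal scaling factors `α k`, Hermitian positive
semidefinite antenna correlation matrices `Rb k`, `Rm k`, channel estimation error variances
`σe2 k ≥ 0` and noise variance `σ2 > 0`. -/
structure MIMOSetup (K N : ℕ) where
  M : Fin K → ℕ
  S : Fin K → ℕ
  hM : ∀ k, 0 < M k
  hS : ∀ k, 0 < S k
  H : ∀ k : Fin K, Matrix (Fin N) (Fin (M k)) ℂ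
  G : ∀ k : Fin K, Matrix (Fin N) (Fin (S k)) ℂ
  U : ∀ k : Fin K, Matrix (Fin (M k)) (Fin (S k)) ℂ
  α : ∀ k : Fin K, Fin (S k) → ℝ
  Rb : Fin K → Matrix (Fin N) (Fin N) ℂ
  Rm : ∀ k : Fin K, Matrix (Fin (M k)) (Fin (M k)) ℂ
  σe2 : Fin K → ℝ
  σ2 : ℝ
  hG : ∀ k i, ((G k)ᴴ * G k) i i = 1
  hU : ∀ k i, ((U k)ᴴ * U k) i i = 1
  hα : ∀ k i, α k i ≠ 0
  hRb : ∀ k, (Rb k).PosSemidef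
  hRm : ∀ k, (Rm k).PosSemidef
  hσe2 : ∀ k, 0 ≤ σe2 k
  hσ2 : 0 < σ2

namespace MIMOSetup

variable {K N : ℕ} (s : MIMOSetup K N)

/-- `α_k` as a diagonal complex matrix. -/
def αM (k : Fin K) : Matrix (Fin (s.S k)) (Fin (s.S k)) ℂ := diagC (s.α k)

/-- `Γ_k^{DL}` for downlink power allocations `P`. -/
def GammaDL (P : ∀ k : Fin K, Matrix (Fin (s.S k)) (Fin (s.S k)) ℂ) (k : Fin K) :
    Matrix (Fin (s.M k)) (Fin (s.M k)) ℂ :=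
  (s.H k)ᴴ * (∑ i, s.G i * P i * (s.G i)ᴴ) * s.H k
    + ((s.σe2 k : ℂ) * (s.Rb k * ∑ i, s.G i * P i * (s.G i)ᴴ).trace) • s.Rm k
    + (s.σ2 : ℂ) • 1

/-- `Γ_c` for uplink power allocations `Q`. -/
def GammaC (Q : ∀ k : Fin K, Matrix (Fin (s.S k)) (Fin (s.S k)) ℂ) :
    Matrix (Fin N) (Fin N) ℂ :=
  (∑ i, (s.H i * s.U i * Q i * (s.U i)ᴴ * (s.H i)ᴴ
    + ((s.σe2 i : ℂ) * (s.Rm i * (s.U i * Q i * (s.U i)ᴴ)).trace) • s.Rb i))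
    + (s.σ2 : ℂ) • 1

/-- The `k`-th user downlink AMSE `ξ̄_k^{DL}`. -/
def xiDLk (P : ∀ k : Fin K, Matrix (Fin (s.S k)) (Fin (s.S k)) ℂ) (k : Fin K) : ℝ :=
  (s.S k : ℝ) + (((P k)⁻¹ * (s.αM k) ^ 2 * (s.U k)ᴴ * s.GammaDL P k * s.U k).trace).re
    - 2 * ((((s.G k)ᴴ * s.H k * s.U k * s.αM k).trace).re)

/-- The `k`-th user uplink AMSE `ξ̄_k^{UL}`. -/
def xiULk (Q : ∀ k : Fin K, Matrix (Fin (s.S k)) (Fin (s.S k)) ℂ) (k : Fin K) : ℝ :=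
  (s.S k : ℝ) + (((Q k)⁻¹ * (s.αM k) ^ 2 * (s.G k)ᴴ * s.GammaC Q * s.G k).trace).re
    - 2 * (((s.αM k * (s.G k)ᴴ * s.H k * s.U k).trace).re)

/-- Downlink sum AMSE `ξ̄^{DL}`. -/
def xiDL (P : ∀ k : Fin K, Matrix (Fin (s.S k)) (Fin (s.S k)) ℂ) : ℝ := ∑ k, s.xiDLk P k

/-- Uplink sum AMSE `ξ̄^{UL}`. -/
def xiUL (Q : ∀ k : Fin K, Matrix (Fin (s.S k)) (Fin (s.S k)) ℂ) : ℝ := ∑ k, s.xiULk Q k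

end MIMOSetup

namespace MIMOSetup

variable {K N : ℕ}

/-- The matrix `X` of the user-wise uplink-to-downlink AMSE transfer (eq. (12)). -/
def Xmat (s : MIMOSetup K N) (Q : ∀ k : Fin K, Fin (s.S k) → ℝ) :
    Matrix (Fin K) (Fin K) ℝ := fun k l =>
  if k = l then
    s.σ2 * (((diagC (Q k))⁻¹ * (s.αM k) ^ 2).trace).re
      + ∑ i ∈ Finset.univ.erase k,
        ((((diagC (Q k))⁻¹ * (s.αM k) ^ 2 * (s.G k)ᴴ * s.H i * s.U i * diagC (Q i)
            * (s.U i)ᴴ * (s.H i)ᴴ * s.G k).trace).re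
          + s.σe2 i * (((s.Rm i * (s.U i * diagC (Q i) * (s.U i)ᴴ)).trace).re)
            * (((s.Rb i * (s.G k * (s.αM k) ^ 2 * (diagC (Q k))⁻¹ * (s.G k)ᴴ)).trace).re))
  else
    -((((diagC (Q l))⁻¹ * (s.αM l) ^ 2 * (s.G l)ᴴ * s.H k * s.U k * diagC (Q k)
        * (s.U k)ᴴ * (s.H k)ᴴ * s.G l).trace).re
      + s.σe2 k * (((s.Rm k * (s.U k * diagC (Q k) * (s.U k)ᴴ)).trace).re)
        * (((s.Rb k * (s.G l * (s.αM l) ^ 2 * (diagC (Q l))⁻¹ * (s.G l)ᴴ)).trace).re))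

end MIMOSetup

/-!
Off the diagonal, `X k l` is minus a sum of real parts of traces of products of positive
semidefinite matrices, so `X` is a Z-matrix; on the diagonal the same interference terms appear
with a plus sign, so every column of `X` sums to `σ² tr(Q_l⁻¹ α_l²) > 0`. Such a matrix is
monotone: if `Xβ ≥ 0` and `P = {k | β k < 0}` were nonempty, summing the rows in `P` would give
`0 ≤ ∑_l (∑_{k ∈ P} X k l) β l < 0`. Monotonicity applied to `±β` gives injectivity, and with a
positive right-hand side the `k`-th row `X k k β k ≥ σ² tr Q_k > 0` forces `β k > 0`.
-/

open Finset

namespace Matrix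

variable {n R : Type*} [Fintype n] [CommRing R] [LinearOrder R] [IsStrictOrderedRing R]
  {A : Matrix n n R}

theorem nonneg_of_mulVec_nonneg_of_sum_col_pos (hoff : Pairwise fun i j => A i j ≤ 0)
    (hcol : ∀ j, 0 < ∑ i, A i j) {v : n → R} (hv : 0 ≤ A *ᵥ v) : 0 ≤ v := by
  classical
  by_contra hneg
  obtain ⟨m, hm⟩ : ∃ m, v m < 0 := by simpa [Pi.le_def] using hneg
  set P := univ.filter fun i => v i < 0
  set c : n → R := fun j => ∑ i ∈ P, A i j
  have hc_pos : ∀ j, v j < 0 → 0 < c j := fun j hj =>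
    calc 0 < ∑ i, A i j := hcol j
      _ = c j + ∑ i ∈ univ.filter (fun i => ¬v i < 0), A i j :=
        (sum_filter_add_sum_filter_not _ _ _).symm
      _ ≤ c j := add_le_of_nonpos_right <| sum_nonpos fun i hi =>
        hoff <| by rintro rfl; exact (mem_filter.1 hi).2 hj
  have hc_nonpos : ∀ j, ¬v j < 0 → c j ≤ 0 := fun j hj =>
    sum_nonpos fun i hi => hoff <| by rintro rfl; exact hj (mem_filter.1 hi).2
  have hsum_neg : ∑ j, c j * v j < 0 := by
    refine sum_neg' (fun j _ => ?_) ⟨m, mem_univ m, mul_neg_of_pos_of_neg (hc_pos m hm) hm⟩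
    by_cases hj : v j < 0
    · exact (mul_neg_of_pos_of_neg (hc_pos j hj) hj).le
    · exact mul_nonpos_of_nonpos_of_nonneg (hc_nonpos j hj) (not_lt.1 hj)
  have hsum_eq : ∑ i ∈ P, (A *ᵥ v) i = ∑ j, c j * v j := by
    simp only [c, mulVec, dotProduct, sum_mul]
    exact sum_comm
  exact hsum_neg.not_ge (hsum_eq ▸ sum_nonneg fun i _ => hv i)

theorem pos_of_mulVec_pos_of_sum_col_pos (hoff : Pairwise fun i j => A i j ≤ 0)
    (hcol : ∀ j, 0 < ∑ i, A i j) {v : n → R} (hv : ∀ i, 0 < (A *ᵥ v) i) (i : n) :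
    0 < v i := by
  classical
  have hv_nonneg : ∀ j, 0 ≤ v j :=
    nonneg_of_mulVec_nonneg_of_sum_col_pos hoff hcol fun j => (hv j).le
  refine (hv_nonneg i).lt_of_ne fun hvi => (hv i).not_ge ?_
  rw [mulVec, dotProduct, ← add_sum_erase _ _ (mem_univ i), ← hvi, mul_zero, zero_add]
  exact sum_nonpos fun j hj => mul_nonpos_of_nonpos_of_nonneg
    (hoff (ne_of_mem_erase hj).symm) (hv_nonneg j)

theorem det_ne_zero_of_nonpos_of_sum_col_pos [DecidableEq n]
    (hoff : Pairwise fun i j => A i j ≤ 0) (hcol : ∀ j, 0 < ∑ i, A i j) : A.det ≠ 0 := by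
  intro hdet
  obtain ⟨v, hv_ne, hAv⟩ := exists_mulVec_eq_zero_iff.mpr hdet
  have hv : 0 ≤ v := nonneg_of_mulVec_nonneg_of_sum_col_pos hoff hcol hAv.ge
  have hnv : 0 ≤ -v :=
    nonneg_of_mulVec_nonneg_of_sum_col_pos hoff hcol (by rw [mulVec_neg, hAv, neg_zero])
  exact hv_ne (le_antisymm (neg_nonneg.1 hnv) hv)

theorem PosSemidef.trace_mul_nonneg {n : Type*} [Fintype n] {A B : Matrix n n ℂ}
    (hA : A.PosSemidef) (hB : B.PosSemidef) : 0 ≤ (A * B).trace := by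
  classical
  open scoped MatrixOrder Matrix.Norms.L2Operator in
  obtain ⟨C, rfl⟩ := CStarAlgebra.nonneg_iff_eq_star_mul_self.mp hB.nonneg
  rw [← Matrix.mul_assoc, Matrix.trace_mul_cycle]
  exact (hA.mul_mul_conjTranspose_same C).trace_nonneg

end Matrix

section diagC

variable {n : ℕ}

theorem diagC_mul (v w : Fin n → ℝ) : diagC v * diagC w = diagC (v * w) := by
  simp [diagC, diagonal_mul_diagonal]

theorem diagC_pow (v : Fin n → ℝ) (m : ℕ) : diagC v ^ m = diagC (v ^ m) := by
  simp [diagC, diagonal_pow]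

theorem diagC_inv {v : Fin n → ℝ} (hv : ∀ i, v i ≠ 0) : (diagC v)⁻¹ = diagC v⁻¹ := by
  refine inv_eq_right_inv ?_
  rw [diagC_mul, diagC, ← diagonal_one]
  congr 1
  funext i
  simp [hv i]

theorem posSemidef_diagC {v : Fin n → ℝ} (hv : 0 ≤ v) : (diagC v).PosSemidef :=
  posSemidef_diagonal_iff.mpr fun i => Complex.zero_le_real.mpr (hv i)

theorem re_trace_diagC_pos {v : Fin n → ℝ} (hn : 0 < n) (hv : ∀ i, 0 < v i) :
    0 < (diagC v).trace.re := by
  have : Nonempty (Fin n) := Fin.pos_iff_nonempty.mp hn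
  simpa [diagC, trace_diagonal] using sum_pos (fun i _ => hv i) univ_nonempty

end diagC

namespace MIMOSetup

variable {K N : ℕ} (s : MIMOSetup K N) (Q : ∀ k : Fin K, Fin (s.S k) → ℝ)

def interference (k l : Fin K) : ℝ :=
  (((diagC (Q l))⁻¹ * (s.αM l) ^ 2 * (s.G l)ᴴ * s.H k * s.U k * diagC (Q k)
      * (s.U k)ᴴ * (s.H k)ᴴ * s.G l).trace).re
    + s.σe2 k * (((s.Rm k * (s.U k * diagC (Q k) * (s.U k)ᴴ)).trace).re)
      * (((s.Rb k * (s.G l * (s.αM l) ^ 2 * (diagC (Q l))⁻¹ * (s.G l)ᴴ)).trace).re)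

theorem Xmat_apply_self (k : Fin K) :
    s.Xmat Q k k = s.σ2 * (((diagC (Q k))⁻¹ * (s.αM k) ^ 2).trace).re
      + ∑ i ∈ univ.erase k, s.interference Q i k := by
  simp only [Xmat]
  rfl

theorem Xmat_apply_of_ne {k l : Fin K} (h : k ≠ l) :
    s.Xmat Q k l = -s.interference Q k l := by
  simp only [Xmat, if_neg h]
  rfl

theorem sum_Xmat_col (l : Fin K) :
    ∑ k, s.Xmat Q k l = s.σ2 * (((diagC (Q l))⁻¹ * (s.αM l) ^ 2).trace).re := by
  rw [← add_sum_erase _ _ (mem_univ l), Xmat_apply_self,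
    sum_congr rfl fun k hk => s.Xmat_apply_of_ne Q (ne_of_mem_erase hk), sum_neg_distrib]
  ring

variable {Q}

theorem inv_diagC_mul_αM_sq (hQ : ∀ k i, 0 < Q k i) (k : Fin K) :
    (diagC (Q k))⁻¹ * s.αM k ^ 2 = diagC ((Q k)⁻¹ * s.α k ^ 2) := by
  rw [diagC_inv fun i => (hQ k i).ne', αM, diagC_pow, diagC_mul]

theorem αM_sq_mul_inv_diagC (hQ : ∀ k i, 0 < Q k i) (k : Fin K) :
    s.αM k ^ 2 * (diagC (Q k))⁻¹ = diagC ((Q k)⁻¹ * s.α k ^ 2) := by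
  rw [diagC_inv fun i => (hQ k i).ne', αM, diagC_pow, diagC_mul, mul_comm]

theorem interference_nonneg (hQ : ∀ k i, 0 < Q k i) (k l : Fin K) :
    0 ≤ s.interference Q k l := by
  let D := diagC ((Q l)⁻¹ * s.α l ^ 2)
  let B := (s.G l)ᴴ * s.H k * s.U k
  have hD : D.PosSemidef :=
    posSemidef_diagC fun i => mul_nonneg (inv_nonneg.2 (hQ l i).le) (sq_nonneg _)
  have hQk : (diagC (Q k)).PosSemidef := posSemidef_diagC fun i => (hQ k i).le
  have hsignal : (diagC (Q l))⁻¹ * (s.αM l) ^ 2 * (s.G l)ᴴ * s.H k * s.U k * diagC (Q k)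
      * (s.U k)ᴴ * (s.H k)ᴴ * s.G l = D * (B * diagC (Q k) * Bᴴ) := by
    rw [s.inv_diagC_mul_αM_sq hQ]
    simp only [D, B, conjTranspose_mul, conjTranspose_conjTranspose, Matrix.mul_assoc]
  have hreceiver :
      s.G l * (s.αM l) ^ 2 * (diagC (Q l))⁻¹ * (s.G l)ᴴ = s.G l * D * (s.G l)ᴴ := by
    rw [Matrix.mul_assoc (s.G l), s.αM_sq_mul_inv_diagC hQ]
  have hsignal_nonneg : 0 ≤ (D * (B * diagC (Q k) * Bᴴ)).trace :=
    hD.trace_mul_nonneg (hQk.mul_mul_conjTranspose_same B)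
  have htransmit_nonneg : 0 ≤ (s.Rm k * (s.U k * diagC (Q k) * (s.U k)ᴴ)).trace :=
    (s.hRm k).trace_mul_nonneg (hQk.mul_mul_conjTranspose_same _)
  have hreceiver_nonneg : 0 ≤ (s.Rb k * (s.G l * D * (s.G l)ᴴ)).trace :=
    (s.hRb k).trace_mul_nonneg (hD.mul_mul_conjTranspose_same _)
  rw [interference, hsignal, hreceiver]
  exact add_nonneg (Complex.nonneg_iff.1 hsignal_nonneg).1 <|
    mul_nonneg (mul_nonneg (s.hσe2 k) (Complex.nonneg_iff.1 htransmit_nonneg).1)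
      (Complex.nonneg_iff.1 hreceiver_nonneg).1

theorem Xmat_nonpos_of_ne (hQ : ∀ k i, 0 < Q k i) : Pairwise fun k l => s.Xmat Q k l ≤ 0 :=
  fun k l h => (Xmat_apply_of_ne s Q h).trans_le (neg_nonpos.2 (s.interference_nonneg hQ k l))

theorem sum_Xmat_col_pos (hQ : ∀ k i, 0 < Q k i) (l : Fin K) : 0 < ∑ k, s.Xmat Q k l := by
  rw [sum_Xmat_col, s.inv_diagC_mul_αM_sq hQ]
  exact mul_pos s.hσ2 <| re_trace_diagC_pos (s.hS l) fun i =>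
    mul_pos (inv_pos.2 (hQ l i)) (sq_pos_of_ne_zero (s.hα l i))

end MIMOSetup

theorem Xmat_invertible_and_solution_positive_general {K N : ℕ}
    (s : MIMOSetup K N)
    (Q : ∀ k : Fin K, Fin (s.S k) → ℝ) (hQ : ∀ k i, 0 < Q k i) :
    IsUnit (s.Xmat Q) ∧
      ∀ β : Fin K → ℝ,
        (s.Xmat Q *ᵥ β = fun k => s.σ2 * ((diagC (Q k)).trace).re) →
          ∀ k, 0 < β k := by
  have hoff := s.Xmat_nonpos_of_ne hQ
  have hcol := s.sum_Xmat_col_pos hQ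
  refine ⟨(isUnit_iff_isUnit_det _).mpr
    (det_ne_zero_of_nonpos_of_sum_col_pos hoff hcol).isUnit, fun β hβ => ?_⟩
  refine pos_of_mulVec_pos_of_sum_col_pos hoff hcol fun k => ?_
  rw [hβ]
  exact mul_pos s.hσ2 (re_trace_diagC_pos (s.hS k) (hQ k))

/-- **Strict positivity of the transfer scaling factors.** Since `σ² > 0`, the matrix `X`
is invertible and the unique solution `β` of `X·β = σ²·(tr Q_1, …, tr Q_K)ᵀ` has all
entries strictly positive. -/
theorem Xmat_invertible_and_solution_positive {K N : ℕ} (hK : 0 < K) (hN : 0 < N)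
    (s : MIMOSetup K N)
    (Q : ∀ k : Fin K, Fin (s.S k) → ℝ) (hQ : ∀ k i, 0 < Q k i) :
    IsUnit (s.Xmat Q) ∧
      ∀ β : Fin K → ℝ,
        (s.Xmat Q *ᵥ β = fun k => s.σ2 * ((diagC (Q k)).trace).re) →
          ∀ k, 0 < β k :=
  Xmat_invertible_and_solution_positive_general s Q hQ
end
end

section
/- Column sums of the downlink-to-uplink transfer matrix and power conservation: in the multiuser MIMO setup with the matrix T as defined, for every column index l ∈ {1,…,K}, Σ_{k=1}^K T_{kl} = σ²·Re tr(P_l⁻¹ α_l²) > 0; consequently, if β̃ ∈ ℝ^K satisfies T·β̃ = σ²·(tr(P_1),…,tr(P_K))ᵀ with β̃_k > 0 for all k and the uplink power allocations are Q_k = β̃_k·α_k²·P_k⁻¹, then Σ_{k=1}^K tr(Q_k) = Σ_{k=1}^K tr(P_k). -/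
open Matrix BigOperators ComplexOrder

noncomputable section

namespace MIMOSetup

variable {K N : ℕ}

/-- The matrix `T` of the user-wise downlink-to-uplink AMSE transfer (eq. (15)). -/
def Tmat (s : MIMOSetup K N) (P : ∀ k : Fin K, Fin (s.S k) → ℝ) :
    Matrix (Fin K) (Fin K) ℝ := fun k l =>
  if k = l then
    s.σ2 * (((diagC (P k))⁻¹ * (s.αM k) ^ 2).trace).re
      + ∑ i ∈ Finset.univ.erase k,
        ((((diagC (P k))⁻¹ * (s.αM k) ^ 2 * (s.U k)ᴴ * (s.H k)ᴴ * s.G i * diagC (P i)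
            * (s.G i)ᴴ * s.H k * s.U k).trace).re
          + s.σe2 k * (((s.Rb k * (s.G i * diagC (P i) * (s.G i)ᴴ)).trace).re)
            * (((s.Rm k * (s.U k * (s.αM k) ^ 2 * (diagC (P k))⁻¹ * (s.U k)ᴴ)).trace).re))
  else
    -((((diagC (P l))⁻¹ * (s.αM l) ^ 2 * (s.U l)ᴴ * (s.H l)ᴴ * s.G k * diagC (P k)
        * (s.G k)ᴴ * s.H l * s.U l).trace).re
      + s.σe2 l * (((s.Rm l * (s.U l * (s.αM l) ^ 2 * (diagC (P l))⁻¹ * (s.U l)ᴴ)).trace).re)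
        * (((s.Rb l * (s.G k * diagC (P k) * (s.G k)ᴴ)).trace).re))

end MIMOSetup

lemma diagC_inv_of_ne {n : ℕ} (v : Fin n → ℝ) (hv : ∀ i, v i ≠ 0) :
    (diagC v)⁻¹ = diagC (fun i => (v i)⁻¹) := by
  apply Matrix.inv_eq_right_inv
  rw [diagC, diagC, Matrix.diagonal_mul_diagonal]
  have : (fun i => (v i : ℂ) * ((v i)⁻¹ : ℝ)) = fun _ => (1 : ℂ) := by
    funext i
    rw [Complex.ofReal_inv, mul_inv_cancel₀ (by exact_mod_cast hv i)]
  rw [this, Matrix.diagonal_one]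

lemma diagC_sq {n : ℕ} (w : Fin n → ℝ) : (diagC w) ^ 2 = diagC (fun i => w i ^ 2) := by
  rw [sq, diagC, diagC, Matrix.diagonal_mul_diagonal]
  have : (fun i => (w i : ℂ) * (w i : ℂ)) = fun i => ((w i ^ 2 : ℝ) : ℂ) := by
    funext i; push_cast; ring
  rw [this]

lemma trace_diagC_inv_mul_sq {n : ℕ} (v w : Fin n → ℝ) (hv : ∀ i, v i ≠ 0) :
    ((diagC v)⁻¹ * (diagC w) ^ 2).trace = ((∑ i, (v i)⁻¹ * w i ^ 2 : ℝ) : ℂ) := by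
  rw [diagC_inv_of_ne v hv, diagC_sq, diagC, diagC, Matrix.diagonal_mul_diagonal,
    Matrix.trace_diagonal]
  push_cast
  simp

lemma trace_sq_mul_diagC_inv {n : ℕ} (v w : Fin n → ℝ) (hv : ∀ i, v i ≠ 0) :
    ((diagC w) ^ 2 * (diagC v)⁻¹).trace = ((∑ i, (v i)⁻¹ * w i ^ 2 : ℝ) : ℂ) := by
  rw [diagC_inv_of_ne v hv, diagC_sq, diagC, diagC, Matrix.diagonal_mul_diagonal,
    Matrix.trace_diagonal]
  push_cast
  simp [mul_comm]

lemma trace_diagC {n : ℕ} (v : Fin n → ℝ) :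
    (diagC v).trace = ((∑ i, v i : ℝ) : ℂ) := by
  rw [diagC, Matrix.trace_diagonal]; push_cast; rfl

lemma Tmat_colsum {K N : ℕ} (s : MIMOSetup K N)
    (P : ∀ k : Fin K, Fin (s.S k) → ℝ) (l : Fin K) :
    ∑ k, s.Tmat P k l = s.σ2 * (((diagC (P l))⁻¹ * (s.αM l) ^ 2).trace).re := by
  classical
  set A : Fin K → ℝ := fun i =>
    ((((diagC (P l))⁻¹ * (s.αM l) ^ 2 * (s.U l)ᴴ * (s.H l)ᴴ * s.G i * diagC (P i)
        * (s.G i)ᴴ * s.H l * s.U l).trace).re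
      + s.σe2 l * (((s.Rb l * (s.G i * diagC (P i) * (s.G i)ᴴ)).trace).re)
        * (((s.Rm l * (s.U l * (s.αM l) ^ 2 * (diagC (P l))⁻¹ * (s.U l)ᴴ)).trace).re))
    with hA
  have hdiag : s.Tmat P l l
      = s.σ2 * (((diagC (P l))⁻¹ * (s.αM l) ^ 2).trace).re
        + ∑ i ∈ Finset.univ.erase l, A i := by
    simp [MIMOSetup.Tmat, hA]
  have hoff : ∀ k ∈ Finset.univ.erase l, s.Tmat P k l = -(A k) := by
    intro k hk
    have hkl : k ≠ l := Finset.ne_of_mem_erase hk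
    simp only [MIMOSetup.Tmat, if_neg hkl, hA]
    ring
  rw [← Finset.add_sum_erase _ _ (Finset.mem_univ l), hdiag,
    Finset.sum_congr rfl hoff, Finset.sum_neg_distrib]
  ring

/-- **Column sums of the downlink-to-uplink transfer matrix and power conservation.**
For every column `l`, `Σ_k T_{kl} = σ²·Re tr(P_l⁻¹ α_l²) > 0`; consequently, if `β̃`
solves `T·β̃ = σ²·(tr P_1, …, tr P_K)ᵀ` with positive entries and `Q_k = β̃_k α_k² P_k⁻¹`,
then `Σ_k tr Q_k = Σ_k tr P_k`. -/
theorem Tmat_column_sums_and_power_conservation {K N : ℕ} (hK : 0 < K) (hN : 0 < N)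
    (s : MIMOSetup K N)
    (P : ∀ k : Fin K, Fin (s.S k) → ℝ) (hP : ∀ k i, 0 < P k i) :
    (∀ l : Fin K,
      (∑ k, s.Tmat P k l = s.σ2 * (((diagC (P l))⁻¹ * (s.αM l) ^ 2).trace).re) ∧
        0 < ∑ k, s.Tmat P k l) ∧
      ∀ (βt : Fin K → ℝ), (∀ k, 0 < βt k) →
        (s.Tmat P *ᵥ βt = fun k => s.σ2 * ((diagC (P k)).trace).re) →
        ∀ (Q : ∀ k : Fin K, Matrix (Fin (s.S k)) (Fin (s.S k)) ℂ),
          (∀ k, Q k = (βt k : ℂ) • ((s.αM k) ^ 2 * (diagC (P k))⁻¹)) →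
          ∑ k, (Q k).trace = ∑ k, (diagC (P k)).trace := by
  have hPne : ∀ k i, P k i ≠ 0 := fun k i => (hP k i).ne'
  -- the column sums, computed explicitly
  have hcol : ∀ l : Fin K,
      ∑ k, s.Tmat P k l = s.σ2 * (∑ i, (P l i)⁻¹ * (s.α l i) ^ 2) := by
    intro l
    rw [Tmat_colsum, MIMOSetup.αM, trace_diagC_inv_mul_sq _ _ (hPne l),
      Complex.ofReal_re]
  constructor
  · intro l
    refine ⟨Tmat_colsum s P l, ?_⟩
    rw [hcol l]
    have hSl : (Finset.univ : Finset (Fin (s.S l))).Nonempty :=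
      ⟨⟨0, s.hS l⟩, Finset.mem_univ _⟩
    exact mul_pos s.hσ2 (Finset.sum_pos (fun i _ =>
      mul_pos (inv_pos.mpr (hP l i)) (pow_two_pos_of_ne_zero (s.hα l i))) hSl)
  · intro βt hβt hβ Q hQ
    -- key real identity
    have hkey : ∑ k, βt k * (∑ i, (P k i)⁻¹ * (s.α k i) ^ 2) = ∑ k, ∑ i, P k i := by
      have h1 : ∀ l : Fin K, ∑ k, s.Tmat P l k * βt k = s.σ2 * (∑ i, P l i) := by
        intro l
        have := congrFun hβ l
        rw [Matrix.mulVec, dotProduct] at this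
        rw [this, trace_diagC]
        simp
      have h2 : ∑ l, ∑ k, s.Tmat P l k * βt k = s.σ2 * ∑ l, ∑ i, P l i := by
        rw [Finset.mul_sum]; exact Finset.sum_congr rfl fun l _ => h1 l
      rw [Finset.sum_comm] at h2
      have h3 : ∀ k : Fin K, ∑ l, s.Tmat P l k * βt k
          = s.σ2 * (βt k * ∑ i, (P k i)⁻¹ * (s.α k i) ^ 2) := by
        intro k
        rw [← Finset.sum_mul, hcol k]; ring
      rw [Finset.sum_congr rfl (fun k _ => h3 k), ← Finset.mul_sum] at h2
      exact mul_left_cancel₀ s.hσ2.ne' h2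
    calc ∑ k, (Q k).trace
        = ∑ k, ((βt k * ∑ i, (P k i)⁻¹ * (s.α k i) ^ 2 : ℝ) : ℂ) := by
          refine Finset.sum_congr rfl fun k _ => ?_
          rw [hQ k, Matrix.trace_smul, MIMOSetup.αM,
            trace_sq_mul_diagC_inv _ _ (hPne k), smul_eq_mul]
          push_cast
          ring
      _ = ∑ k, (diagC (P k)).trace := by
          rw [← Complex.ofReal_sum, hkey]
          rw [Complex.ofReal_sum]
          exact Finset.sum_congr rfl fun k _ => (trace_diagC (P k)).symm
end
end
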